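/- arXiv:2212.05553 — 2 statements merged into one kernel-verified Lean document; each statement's English description precedes it below -/
import Mathlib

section
/- For any infinite locally finite rooted tree T, the branching number br(T) is at most the lower exponential growth rate gr(T), where br(T) = sup{λ > 0 : inf over cutsets π separating the root from infinity of Σ_{e∈π} λ^{-|e|} > 0} and gr(T) = liminf_n |T_n|^{1/n}, with T_n the set of edges at distance n from the root. -/
open Filter ENNReal

namespace TreeNotions

variable {α : Type}

/-- Vertices (equivalently, edges indexed by their upper endpoint) at level `n`. -/
def level (T : Set (List α)) (n : ℕ) : Set (List α) := {v ∈ T | v.length = n}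

/-- The ball of radius `n` around the root. -/
def ball (T : Set (List α)) (n : ℕ) : Set (List α) := {v ∈ T | v.length ≤ n}

/-- An infinite simple path from the root. -/
def IsRay (T : Set (List α)) (r : ℕ → List α) : Prop :=
  r 0 = [] ∧ ∀ n, r n ∈ T ∧ ∃ a, r (n + 1) = r n ++ [a]

/-- A cutset separating the root from infinity: a set of edges (identified with their
upper endpoints) meeting every infinite simple path from the root. -/
def IsCutset (T : Set (List α)) (π : Set (List α)) : Prop :=
  (∀ v ∈ π, v ∈ T ∧ v ≠ []) ∧ ∀ r, IsRay T r → ∃ n, r n ∈ π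

/-- An infinite, locally finite, rooted (prefix-closed) tree of words. -/
def IsTree (T : Set (List α)) : Prop :=
  [] ∈ T ∧ (∀ v ∈ T, v.dropLast ∈ T) ∧ (∀ v ∈ T, {a : α | v ++ [a] ∈ T}.Finite) ∧ T.Infinite

/-- The branching number. -/
noncomputable def br (T : Set (List α)) : ℝ≥0∞ :=
  sSup {lam : ℝ≥0∞ | 0 < lam ∧
    0 < ⨅ (π) (_ : IsCutset T π), ∑' e : π, lam⁻¹ ^ (e : List α).length}

/-- The lower exponential growth rate. -/
noncomputable def gr (T : Set (List α)) : ℝ≥0∞ :=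
  Filter.liminf (fun n => (Nat.card (level T n) : ℝ≥0∞) ^ ((n : ℝ)⁻¹)) atTop

/-- The intermediate branching number (with `sSup ∅ = 0`). -/
noncomputable def Ibr (T : Set (List α)) : ℝ :=
  sSup {lam : ℝ | 0 < lam ∧
    0 < ⨅ (π) (_ : IsCutset T π),
      ∑' e : π, ENNReal.ofReal (Real.exp (-((e : List α).length : ℝ) ^ lam))}

/-- The intermediate growth rate (with `sSup ∅ = 0`). -/
noncomputable def Igr (T : Set (List α)) : ℝ :=
  sSup {lam : ℝ | 0 < lam ∧
    0 < Filter.liminf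
      (fun n => ∑' _e : level T n, ENNReal.ofReal (Real.exp (-(n : ℝ) ^ lam))) atTop}

/-- The branching-ruin number (with `sSup ∅ = 0`). -/
noncomputable def brr (T : Set (List α)) : ℝ :=
  sSup {lam : ℝ | 0 < lam ∧
    0 < ⨅ (π) (_ : IsCutset T π),
      ∑' e : π, ENNReal.ofReal (((e : List α).length : ℝ) ^ (-lam))}

/-- The polynomial growth rate (with `sSup ∅ = 0`). -/
noncomputable def grr (T : Set (List α)) : ℝ :=
  sSup {lam : ℝ | 0 < lam ∧
    0 < Filter.liminf
      (fun n => ∑' _e : level T n, ENNReal.ofReal ((n : ℝ) ^ (-lam))) atTop}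

/-- The descendant subtree of a vertex `w`. -/
def desc (T : Set (List α)) (w : List α) : Set (List α) := {v ∈ T | w <+: v}

/-- Adjacency in a tree of words. -/
def Adj (u v : List α) : Prop := (∃ a, v = u ++ [a]) ∨ ∃ a, u = v ++ [a]

/-- A tree of words is subperiodic if for some `N ≥ 0`, every vertex `x` admits an
adjacency-preserving injection from `T^x` to `T^{f(x)}` with `|f(x)| ≤ N`. -/
def IsSubperiodic (T : Set (List α)) : Prop :=
  ∃ N : ℕ, ∀ w ∈ T, ∃ f : List α → List α,
    f w ∈ T ∧ (f w).length ≤ N ∧ Set.InjOn f (desc T w) ∧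
    Set.MapsTo f (desc T w) (desc T (f w)) ∧
    ∀ u ∈ desc T w, ∀ v ∈ desc T w, Adj u v → Adj (f u) (f v)

/-- Number of children of the `i`-th vertex (from the left) at level `n` of the 1-3 tree. -/
def childCount (n i : ℕ) : ℕ := if n = 0 then 2 else if i < 2 ^ (n - 1) then 1 else 3

/-- The ordered list of (labelled) vertices at level `n` of the 1-3 tree. -/
def T13Level : ℕ → List (List ℕ)
  | 0 => [[]]
  | n + 1 => ((T13Level n).zipIdx.map Prod.swap).flatMap fun p => (List.range (childCount n p.1)).map fun j => p.2 ++ [j]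

/-- The 1-3 tree, as a set of labelled words. -/
def T13 : Set (List ℕ) := {w | ∃ n, w ∈ T13Level n}

/-- Replace the letter at level `k + 1` by that letter followed by `k` zeros:
the edge at level `k + 1` is subdivided into a path of `k + 1` edges. -/
def expandFrom : ℕ → List ℕ → List ℕ
  | _, [] => []
  | k, a :: rest => (a :: List.replicate k 0) ++ expandFrom (k + 1) rest

/-- The subdivided 1-3 tree `T₀`: each level-`n` edge of the 1-3 tree becomes a path of
`n` edges. -/
def T0 : Set (List ℕ) := {u | ∃ w ∈ T13, u <+: expandFrom 0 w}

/-- The prefix of length `n` of a sequence. -/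
def pref (x : ℕ → ℕ) (n : ℕ) : List ℕ := (List.range n).map x

/-- The set of sequences coded by `T₀` (its rays). -/
def E0 : Set (ℕ → ℕ) := {x | ∀ n, pref x n ∈ T0}

/-- The left shift map. -/
def shift (x : ℕ → ℕ) : ℕ → ℕ := fun n => x (n + 1)

/-- The shift closure of `E₀`. -/
def Etilde : Set (ℕ → ℕ) := ⋃ j : ℕ, shift^[j] '' E0

/-- The prefix tree `Φ(E)` of a set of sequences. -/
def treeOf (E : Set (ℕ → ℕ)) : Set (List ℕ) := {w | ∃ x ∈ E, ∃ n, w = pref x n}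

/-- The tree `T̃ = Φ(Ẽ)`. -/
def Ttilde : Set (List ℕ) := treeOf Etilde

end TreeNotions


section Aux
open TreeNotions Filter ENNReal

private lemma level_len {α : Type} {T : Set (List α)} {n : ℕ} {v : List α}
    (h : v ∈ level T n) : v.length = n := h.2

private lemma level_finite {α : Type} (T : Set (List α)) (hT : IsTree T) (n : ℕ) :
    (level T n).Finite := by
  induction n with
  | zero =>
    refine (Set.finite_singleton ([] : List α)).subset ?_
    rintro v ⟨hv, h0⟩
    simp [List.length_eq_zero_iff.mp h0]
  | succ n ih =>
    have hsub : level T (n+1) ⊆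
        ⋃ w ∈ level T n, (fun a => w ++ [a]) '' {a : α | w ++ [a] ∈ T} := by
      rintro v ⟨hv, hlen⟩
      have hne : v ≠ [] := by intro h; simp [h] at hlen
      have hw : v.dropLast ∈ T := hT.2.1 v hv
      have hwl : v.dropLast.length = n := by
        simp [List.length_dropLast, hlen]
      have hv' : v.dropLast ++ [v.getLast hne] = v := List.dropLast_append_getLast hne
      refine Set.mem_biUnion (show v.dropLast ∈ level T n from ⟨hw, hwl⟩) ?_
      exact ⟨v.getLast hne, by simp [hv', hv], hv'⟩
    exact (ih.biUnion fun w hw => ((hT.2.2.1 w hw.1).image _)).subset hsub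

private lemma level_cutset {α : Type} (T : Set (List α)) (hT : IsTree T) (n : ℕ) :
    IsCutset T (level T (n+1)) := by
  constructor
  · rintro v ⟨hv, hlen⟩
    exact ⟨hv, by intro h; simp [h] at hlen⟩
  · intro r hr
    have hlen : ∀ k, (r k).length = k := by
      intro k
      induction k with
      | zero => simp [hr.1]
      | succ k ih => obtain ⟨a, ha⟩ := (hr.2 k).2; simp [ha, ih]
    exact ⟨n+1, (hr.2 (n+1)).1, hlen (n+1)⟩

end Aux

open TreeNotions Filter ENNReal in
/-- For any infinite locally finite rooted tree, the branching number is at most the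
lower exponential growth rate. -/
theorem br_le_gr {α : Type} (T : Set (List α)) (hT : IsTree T) : br T ≤ gr T := by
  classical
  refine sSup_le ?_
  rintro lam ⟨hlam0, hinf⟩
  set c : ℝ≥0∞ := ⨅ (π) (_ : IsCutset T π), ∑' e : π, lam⁻¹ ^ (e : List α).length with hc
  have key : ∀ n : ℕ, c ≤ (Nat.card (level T (n+1)) : ℝ≥0∞) * lam⁻¹ ^ (n+1) := by
    intro n
    have h1 : c ≤ ∑' e : level T (n+1), lam⁻¹ ^ (e : List α).length :=
      iInf₂_le (level T (n+1)) (level_cutset T hT n)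
    have h2 : ∑' e : level T (n+1), lam⁻¹ ^ (e : List α).length
        = ∑' _e : level T (n+1), lam⁻¹ ^ (n+1) :=
      tsum_congr fun e => by rw [level_len e.2]
    have h3 : ∑' _e : level T (n+1), lam⁻¹ ^ (n+1)
        = (level T (n+1)).encard * lam⁻¹ ^ (n+1) := ENNReal.tsum_set_const _ _
    have h4 : ((level T (n+1)).encard : ℝ≥0∞) = (Nat.card (level T (n+1)) : ℝ≥0∞) := by
      have hne := (level_finite T hT (n+1)).encard_lt_top.ne
      lift (level T (n+1)).encard to ℕ using hne with k hk
      simp [Nat.card_coe_set_eq, Set.ncard_def, ← hk]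
    calc c ≤ _ := h1
    _ = _ := by rw [h2, h3, h4]
  have hlamtop : lam ≠ ∞ := by
    intro h
    have := key 0
    rw [h] at this
    simp at this
    exact absurd this (by simpa [hc] using hinf.ne')
  have hctop : c ≠ ∞ := by
    refine ne_top_of_le_ne_top ?_ (key 0)
    exact ENNReal.mul_ne_top (by simp) (ENNReal.pow_ne_top (by simp [hlam0.ne']))
  have hc0 : c ≠ 0 := hinf.ne'
  have key2 : ∀ n : ℕ, c * lam ^ (n+1) ≤ (Nat.card (level T (n+1)) : ℝ≥0∞) := by
    intro n
    have := mul_le_mul_left (key n) (lam ^ (n+1))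
    calc c * lam ^ (n+1) ≤ (Nat.card (level T (n+1)) : ℝ≥0∞) * lam⁻¹ ^ (n+1) * lam ^ (n+1) := this
    _ = (Nat.card (level T (n+1)) : ℝ≥0∞) * (lam⁻¹ * lam) ^ (n+1) := by
        rw [mul_assoc, ← mul_pow]
    _ = _ := by rw [ENNReal.inv_mul_cancel hlam0.ne' hlamtop, one_pow, mul_one]
  have hrpow : ∀ n : ℕ, n ≠ 0 →
      c ^ ((n : ℝ)⁻¹) * lam ≤ (Nat.card (level T n) : ℝ≥0∞) ^ ((n : ℝ)⁻¹) := by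
    intro n hn
    obtain ⟨m, rfl⟩ := Nat.exists_eq_succ_of_ne_zero hn
    have h1 : (c * lam ^ (m+1)) ^ (((m+1 : ℕ) : ℝ)⁻¹)
        ≤ (Nat.card (level T (m+1)) : ℝ≥0∞) ^ (((m+1 : ℕ) : ℝ)⁻¹) :=
      ENNReal.rpow_le_rpow (key2 m) (by positivity)
    have h2 : (c * lam ^ (m+1)) ^ (((m+1 : ℕ) : ℝ)⁻¹)
        = c ^ (((m+1 : ℕ) : ℝ)⁻¹) * lam := by
      rw [ENNReal.mul_rpow_of_ne_top hctop (ENNReal.pow_ne_top hlamtop),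
        ← ENNReal.rpow_natCast lam (m+1), ← ENNReal.rpow_mul,
        mul_inv_cancel₀ (by exact_mod_cast hn), ENNReal.rpow_one]
    rw [← h2]; exact h1
  have htends : Tendsto (fun n : ℕ => c ^ ((n : ℝ)⁻¹)) atTop (nhds (1:ℝ≥0∞)) := by
    have hcr : 0 < c.toReal := ENNReal.toReal_pos hc0 hctop
    have hreal : Tendsto (fun n : ℕ => c.toReal ^ ((n : ℝ)⁻¹)) atTop (nhds (1:ℝ)) := by
      have := (Real.continuousAt_const_rpow (a := c.toReal) hcr.ne').tendsto.comp
        (tendsto_inv_atTop_nhds_zero_nat (𝕜 := ℝ))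
      simpa [Function.comp_def, Real.rpow_zero] using this
    have := (ENNReal.tendsto_ofReal hreal)
    simp only [ENNReal.ofReal_one] at this
    refine this.congr fun n => ?_
    rw [← ENNReal.ofReal_rpow_of_pos hcr, ENNReal.ofReal_toReal hctop]
  have hliminf : lam = Filter.liminf (fun n : ℕ => c ^ ((n : ℝ)⁻¹) * lam) atTop := by
    have : Tendsto (fun n : ℕ => c ^ ((n : ℝ)⁻¹) * lam) atTop (nhds (1 * lam)) :=
      ENNReal.Tendsto.mul_const htends (Or.inr hlamtop)
    rw [one_mul] at this
    exact this.liminf_eq.symm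
  rw [gr, hliminf]
  refine Filter.liminf_le_liminf ?_
  filter_upwards [Filter.eventually_ge_atTop 1] with n hn
  exact hrpow n (by omega)
end

section
/- Let T̃ = Φ(Ẽ) be the shift-closure tree of the subdivided 1-3 tree as above. Then lim_{n→∞} (log log |B(n)|)/(log n) = 1/2, where B(n) is the ball of radius n around the root of T̃. -/
open Filter ENNReal

namespace TreeNotions

lemma childCount_pos (n i : ℕ) : 0 < childCount n i := by
  unfold childCount; split <;> [norm_num; split <;> norm_num]

lemma childCount_le (n i : ℕ) : childCount n i ≤ 3 := by
  unfold childCount; split <;> [norm_num; split <;> norm_num]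

lemma mem_t13level_succ {n : ℕ} {v : List ℕ} :
    v ∈ T13Level (n+1) ↔ ∃ p ∈ ((T13Level n).zipIdx.map Prod.swap), ∃ j < childCount n p.1, v = p.2 ++ [j] := by
  simp only [T13Level, List.mem_flatMap]
  constructor
  · rintro ⟨p, hp, hv⟩
    obtain ⟨j, hj, rfl⟩ := List.mem_map.1 hv
    exact ⟨p, hp, j, List.mem_range.1 hj, rfl⟩
  · rintro ⟨p, hp, j, hj, rfl⟩; exact ⟨p, hp, List.mem_map.2 ⟨j, List.mem_range.2 hj, rfl⟩⟩

lemma t13level_length : ∀ {n : ℕ} {w : List ℕ}, w ∈ T13Level n → w.length = n := by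
  intro n
  induction n with
  | zero => intro w hw; simp [T13Level] at hw; simp [hw]
  | succ n ih =>
    intro w hw
    rw [mem_t13level_succ] at hw
    obtain ⟨p, hp, j, hj, rfl⟩ := hw
    have hp2 : p.2 ∈ T13Level n := by
      obtain ⟨q, hq, rfl⟩ := List.mem_map.1 hp
      exact List.fst_mem_of_mem_zipIdx hq
    simp [ih hp2]

lemma t13level_entries : ∀ {n : ℕ} {w : List ℕ}, w ∈ T13Level n → ∀ a ∈ w, a < 3 := by
  intro n
  induction n with
  | zero => intro w hw; simp [T13Level] at hw; simp [hw]
  | succ n ih =>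
    intro w hw a ha
    rw [mem_t13level_succ] at hw
    obtain ⟨p, hp, j, hj, rfl⟩ := hw
    have hp2 : p.2 ∈ T13Level n := by
      obtain ⟨q, hq, rfl⟩ := List.mem_map.1 hp
      exact List.fst_mem_of_mem_zipIdx hq
    rcases List.mem_append.1 ha with h | h
    · exact ih hp2 a h
    · simp at h; exact h ▸ lt_of_lt_of_le hj (childCount_le n p.1)

lemma t13level_append_zero {n : ℕ} {w : List ℕ} (h : w ∈ T13Level n) :
    w ++ [0] ∈ T13Level (n+1) := by
  rw [mem_t13level_succ]
  obtain ⟨i, hi, hget⟩ := List.getElem_of_mem h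
  exact ⟨(i, w), List.mem_map.2 ⟨(w, i), by rw [List.mem_zipIdx_iff_getElem?]; simp [hget.symm ▸ List.getElem?_eq_getElem hi, hget], rfl⟩,
    0, childCount_pos n i, rfl⟩


lemma sum_childCount (n : ℕ) : ∑ i ∈ Finset.range (2 ^ n), childCount n i = 2 ^ (n + 1) := by
  rcases Nat.eq_zero_or_pos n with rfl | hn
  · simp [childCount]
  · have h1 : 2 ^ (n-1) ≤ 2 ^ n := Nat.pow_le_pow_right (by norm_num) (Nat.sub_le n 1)
    rw [Finset.range_eq_Ico, ← Finset.sum_Ico_consecutive _ (Nat.zero_le _) h1]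
    have e1 : ∑ i ∈ Finset.Ico 0 (2^(n-1)), childCount n i = 2^(n-1) := by
      rw [Finset.sum_congr rfl (g := fun _ => 1) (fun i hi => by
        simp only [Finset.mem_Ico] at hi
        simp [childCount, hi.2, hn.ne'])]
      simp
    have e2 : ∑ i ∈ Finset.Ico (2^(n-1)) (2^n), childCount n i = (2^n - 2^(n-1)) * 3 := by
      rw [Finset.sum_congr rfl (g := fun _ => 3) (fun i hi => by
        simp only [Finset.mem_Ico] at hi
        simp [childCount, hn.ne', Nat.not_lt.2 hi.1])]
      simp [Nat.card_Ico, mul_comm]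
    rw [e1, e2]
    have : 2^n = 2 * 2^(n-1) := by
      rw [← pow_succ']
      congr 1
      omega
    omega

lemma t13level_card : ∀ n : ℕ, (T13Level n).length = 2 ^ n := by
  intro n
  induction n with
  | zero => simp [T13Level]
  | succ n ih =>
    show (((T13Level n).zipIdx.map Prod.swap).flatMap _).length = _
    rw [List.length_flatMap]
    have h1 : List.map (fun p : ℕ × List ℕ =>
        ((List.range (childCount n p.1)).map fun j => p.2 ++ [j]).length) ((T13Level n).zipIdx.map Prod.swap)
        = List.map (childCount n ∘ Prod.fst) ((T13Level n).zipIdx.map Prod.swap) := by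
      apply List.map_congr_left; intro p _; simp
    have hfst : List.map Prod.fst ((T13Level n).zipIdx.map Prod.swap) = List.range (T13Level n).length := by
      rw [List.map_map]; exact (List.zipIdx_map_snd 0 _).trans List.range_eq_range'.symm
    rw [h1, ← List.map_map (g := childCount n) (f := Prod.fst), hfst, ih]
    show ((List.range (2^n)).map (childCount n)).sum = _
    rw [show ((List.range (2^n)).map (childCount n)).sum
        = ∑ i ∈ Finset.range (2^n), childCount n i from rfl, sum_childCount]
lemma t13level_nodup : ∀ n : ℕ, (T13Level n).Nodup := by
  intro n
  induction n with
  | zero => simp [T13Level]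
  | succ n ih =>
    show (((T13Level n).zipIdx.map Prod.swap).flatMap _).Nodup
    rw [List.nodup_flatMap]
    constructor
    · intro p _
      apply List.Nodup.map_on _ List.nodup_range
      intro a _ b _ hab
      simpa using hab
    · rw [List.pairwise_iff_getElem]
      intro i j hi hj hij
      simp only [List.length_map, List.length_zipIdx] at hi hj
      simp only [List.getElem_map, List.getElem_zipIdx, Prod.swap, Nat.zero_add]
      intro w hw hw'
      simp only [List.mem_map] at hw hw'
      obtain ⟨a, _, rfl⟩ := hw
      obtain ⟨b, _, hab⟩ := hw'
      have h2 : (T13Level n)[i] = (T13Level n)[j] := by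
        have := congrArg List.dropLast hab
        simpa using this.symm
      exact absurd ((List.Nodup.getElem_inj_iff ih).1 h2) hij.ne
lemma expandFrom_append : ∀ (l₁ : List ℕ) (k : ℕ) (l₂ : List ℕ),
    expandFrom k (l₁ ++ l₂) = expandFrom k l₁ ++ expandFrom (k + l₁.length) l₂ := by
  intro l₁
  induction l₁ with
  | nil => simp [expandFrom]
  | cons a r ih =>
    intro k l₂
    show (a :: List.replicate k 0) ++ expandFrom (k+1) (r ++ l₂) = _
    rw [ih (k+1) l₂, List.length_cons,
      show k + 1 + r.length = k + (r.length + 1) from by ring]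
    show _ = ((a :: List.replicate k 0) ++ expandFrom (k+1) r) ++ _
    rw [List.append_assoc]

lemma expandFrom_length : ∀ (l : List ℕ) (k : ℕ),
    2 * (expandFrom k l).length = l.length * (l.length + 2 * k + 1) := by
  intro l
  induction l with
  | nil => simp [expandFrom]
  | cons a r ih =>
    intro k
    simp only [expandFrom, List.length_append, List.length_cons, List.length_replicate]
    rw [Nat.mul_add, ih (k+1)]
    ring

lemma le_expandFrom_length (l : List ℕ) (k : ℕ) : l.length ≤ (expandFrom k l).length := by
  have := expandFrom_length l k
  nlinarith [l.length.zero_le]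

lemma expandFrom_inj : ∀ (a : List ℕ) (b : List ℕ) (k : ℕ), a.length = b.length →
    expandFrom k a = expandFrom k b → a = b := by
  intro a
  induction a with
  | nil => intro b k h _; exact (List.length_eq_zero_iff.1 h.symm).symm ▸ rfl
  | cons x r ih =>
    intro b k h he
    cases b with
    | nil => simp at h
    | cons y s =>
      simp only [expandFrom, List.cons_append, List.cons.injEq] at he
      obtain ⟨rfl, he⟩ := he
      have := List.append_cancel_left he
      simp at h
      rw [ih s (k+1) h this]

lemma expandFrom_drop : ∀ (y : List ℕ) (k j : ℕ),
    ∃ e i, e ≤ k + i ∧ (expandFrom k y).drop j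
      = List.replicate e 0 ++ expandFrom (k + i) (y.drop i) := by
  intro y
  induction y with
  | nil => intro k j; exact ⟨0, 0, by simp, by simp [expandFrom]⟩
  | cons a r ih =>
    intro k j
    rcases Nat.eq_zero_or_pos j with rfl | hj
    · exact ⟨0, 0, by simp, by simp⟩
    rcases le_or_gt j (k + 1) with hle | hlt
    · obtain ⟨m, rfl⟩ : ∃ m, j = m + 1 := ⟨j - 1, by omega⟩
      refine ⟨k - m, 1, by omega, ?_⟩
      show ((a :: List.replicate k 0) ++ expandFrom (k+1) r).drop (m+1) = _
      rw [List.drop_append]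
      simp only [List.length_cons, List.length_replicate, List.drop_succ_cons,
        List.drop_replicate]
      rw [show m + 1 - (k + 1) = 0 from by omega, List.drop_zero]
      congr 2
    · obtain ⟨e, i, hei, hd⟩ := ih (k+1) (j - (k+1))
      refine ⟨e, i + 1, by omega, ?_⟩
      show ((a :: List.replicate k 0) ++ expandFrom (k+1) r).drop j = _
      rw [List.drop_append]
      simp only [List.length_cons, List.length_replicate]
      rw [List.drop_of_length_le (by simp; omega), hd]
      simp only [List.nil_append, List.drop_succ_cons]
      rw [show k + 1 + i = k + (i + 1) from by ring]
-- new material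
lemma pref_length (x : ℕ → ℕ) (n : ℕ) : (pref x n).length = n := by simp [pref]

lemma getElem_pref (x : ℕ → ℕ) {n i : ℕ} (h : i < (pref x n).length) : (pref x n)[i] = x i := by
  simp [pref] at h ⊢

lemma shift_iterate (x : ℕ → ℕ) : ∀ (j : ℕ) (i : ℕ), shift^[j] x i = x (i + j) := by
  intro j
  induction j generalizing x with
  | zero => simp
  | succ j ih =>
    intro i
    rw [Function.iterate_succ_apply, ih (shift x) i]
    simp [shift]; ring_nf

lemma pref_shift (x : ℕ → ℕ) (j n : ℕ) :
    pref (shift^[j] x) n = (pref x (j + n)).drop j := by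
  apply List.ext_getElem
  · simp [pref]
  · intro i h1 h2
    rw [List.getElem_drop, getElem_pref, getElem_pref, shift_iterate]
    ring_nf

lemma replicate_mem_t13level {m : ℕ} {w : List ℕ} (h : w ∈ T13Level m) (k : ℕ) :
    w ++ List.replicate k 0 ∈ T13Level (m + k) := by
  induction k with
  | zero => simpa using h
  | succ k ih =>
    have := t13level_append_zero ih
    rw [List.append_assoc] at this
    rw [List.replicate_succ']
    exact this

lemma expand_mem_Ttilde {m : ℕ} {w : List ℕ} (h : w ∈ T13Level m) :
    expandFrom 0 w ∈ Ttilde := by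
  set W : ℕ → List ℕ := fun k => expandFrom 0 (w ++ List.replicate k 0) with hW
  have hlen : ∀ k, k ≤ (W k).length := fun k =>
    le_trans (by simp) (le_expandFrom_length (w ++ List.replicate k 0) 0)
  have hpre : ∀ k k', k ≤ k' → W k <+: W k' := by
    intro k k' hkk
    have h2 : w ++ List.replicate k' 0
        = (w ++ List.replicate k 0) ++ List.replicate (k' - k) 0 := by
      rw [List.append_assoc, ← List.replicate_add]
      congr 2; omega
    rw [hW]
    simp only [h2, expandFrom_append]
    exact ⟨_, rfl⟩
  set x : ℕ → ℕ := fun i => (W (i+1)).getD i 0 with hx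
  have hpx : ∀ n, pref x n = (W n).take n := by
    intro n
    apply List.ext_getElem
    · simp [pref, Nat.min_eq_left (hlen n)]
    · intro i h1 h2
      rw [getElem_pref, List.getElem_take]
      have hi : i < n := by simpa [pref] using h1
      have hiw : i < (W (i+1)).length := lt_of_lt_of_le (Nat.lt_succ_self i) (hlen (i+1))
      rw [hx]
      simp only
      rw [List.getD_eq_getElem _ _ hiw]
      exact List.IsPrefix.getElem (hpre (i+1) n hi) hiw
  have hxE0 : x ∈ E0 := by
    intro n
    rw [hpx n]
    exact ⟨w ++ List.replicate n 0, ⟨m + n, replicate_mem_t13level h n⟩, List.take_prefix _ _⟩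
  have hxEt : x ∈ Etilde := Set.mem_iUnion.2 ⟨0, by simpa using hxE0⟩
  refine ⟨x, hxEt, (expandFrom 0 w).length, ?_⟩
  have h0 : W 0 = expandFrom 0 w := by rw [hW]; simp
  rw [hpx]
  have : W 0 <+: W (expandFrom 0 w).length := hpre _ _ (Nat.zero_le _)
  rw [h0] at this
  exact (List.prefix_iff_eq_take.1 this)

lemma mem_Ttilde_elim {v : List ℕ} (h : v ∈ Ttilde) :
    ∃ j y, y ∈ T13 ∧ v = ((expandFrom 0 y).drop j).take v.length := by
  obtain ⟨x', hx', n, rfl⟩ := h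
  rcases Set.mem_iUnion.1 hx' with ⟨j, hj⟩
  rcases hj with ⟨x, hx, hxe⟩
  subst hxe
  obtain ⟨y, hy, hpre⟩ := hx (j + n)
  refine ⟨j, y, hy, ?_⟩
  rw [pref_length, pref_shift, List.prefix_iff_eq_take.1 hpre, pref_length, List.drop_take]
  congr 1
  omega
/-- reconstruction map -/
def recon (q : ℕ × ℕ × ℕ × List ℕ) : List ℕ :=
  (List.replicate q.2.1 0 ++ expandFrom q.2.2.1 q.2.2.2).take q.1

lemma take_rep_append (n e : ℕ) (X : List ℕ) :
    (List.replicate e 0 ++ X).take n = List.replicate (min n e) 0 ++ X.take (n - e) := by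
  rw [List.take_append, List.take_replicate, List.length_replicate]

lemma take_expandFrom_cap {q c c' : ℕ} (hc : q ≤ c + 1) (hc' : q ≤ c' + 1) (l : List ℕ) :
    (expandFrom c l).take q = (expandFrom c' l).take q := by
  cases l with
  | nil => simp [expandFrom]
  | cons a r =>
    show ((a :: List.replicate c 0) ++ _).take q = ((a :: List.replicate c' 0) ++ _).take q
    rw [List.take_append_of_le_length (by simpa using hc),
      List.take_append_of_le_length (by simpa using hc')]
    cases q with
    | zero => simp
    | succ q =>
      simp only [List.take_succ_cons, List.take_replicate]
      congr 2
      omega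

lemma take_expandFrom_take {q t : ℕ} (ht : 2 * q ≤ t * (t + 1)) (c : ℕ) (l : List ℕ) :
    (expandFrom c l).take q = (expandFrom c (l.take t)).take q := by
  rcases le_or_gt l.length t with hl | hl
  · rw [List.take_of_length_le hl]
  · have hsplit : l = l.take t ++ l.drop t := (List.take_append_drop t l).symm
    rw [show expandFrom c l = expandFrom c (l.take t ++ l.drop t) from by rw [← hsplit],
      expandFrom_append]
    apply List.take_append_of_le_length
    have h2 : 2 * (expandFrom c (l.take t)).length = t * (t + 2 * c + 1) := by
      rw [expandFrom_length, List.length_take, Nat.min_eq_left hl.le]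
    nlinarith

/-- main normal form -/
lemma take_drop_expand_recon {n n' j t : ℕ} (y : List ℕ) (hn' : n' ≤ n)
    (ht : 2 * n ≤ t * (t + 1)) :
    ∃ e c l, e ≤ n' ∧ c ≤ n' ∧ l.length ≤ t ∧ (∀ a ∈ l, a ∈ y) ∧
      ((expandFrom 0 y).drop j).take n' = recon (n', e, c, l) := by
  obtain ⟨e₀, i, he₀, hd⟩ := expandFrom_drop y 0 j
  rw [Nat.zero_add] at he₀ hd
  refine ⟨min e₀ n', min i n', (y.drop i).take t, min_le_right _ _, min_le_right _ _,
    List.length_take_le _ _, fun a ha => List.mem_of_mem_drop (List.mem_of_mem_take ha), ?_⟩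
  rw [hd]
  unfold recon
  simp only
  rw [take_rep_append, take_rep_append]
  have h1 : min n' e₀ = min n' (min e₀ n') := by omega
  have h2 : n' - e₀ = n' - min e₀ n' := by omega
  rw [← h1, ← h2]
  congr 1
  set q := n' - e₀ with hq
  have hqn : q ≤ n' := Nat.sub_le _ _
  have step1 : (expandFrom i (y.drop i)).take q = (expandFrom (min i n') (y.drop i)).take q := by
    rcases le_or_gt i n' with hi | hi
    · rw [Nat.min_eq_left hi]
    · exact take_expandFrom_cap (by omega) (by omega) _
  rw [step1]
  exact take_expandFrom_take (by omega) _ _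
def listFinset : ℕ → Finset (List ℕ)
  | 0 => {[]}
  | t+1 => insert [] (((Finset.range 3) ×ˢ listFinset t).image fun p => p.1 :: p.2)

lemma mem_listFinset : ∀ (t : ℕ) (l : List ℕ), l.length ≤ t → (∀ a ∈ l, a < 3) →
    l ∈ listFinset t := by
  intro t
  induction t with
  | zero => intro l hl _; simp [listFinset, List.length_eq_zero_iff.1 (Nat.le_zero.1 hl)]
  | succ t ih =>
    intro l hl ha
    cases l with
    | nil => simp [listFinset]
    | cons a r =>
      refine Finset.mem_insert_of_mem (Finset.mem_image.2 ⟨(a, r), ?_, rfl⟩)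
      refine Finset.mem_product.2 ⟨Finset.mem_range.2 (ha a (by simp)), ?_⟩
      exact ih r (by simpa using hl) (fun b hb => ha b (by simp [hb]))

lemma listFinset_card : ∀ t : ℕ, (listFinset t).card ≤ 4 ^ (t + 1) := by
  intro t
  induction t with
  | zero => simp [listFinset]
  | succ t ih =>
    refine le_trans (Finset.card_insert_le _ _) ?_
    refine le_trans (Nat.add_le_add_right (Finset.card_image_le) 1) ?_
    rw [Finset.card_product, Finset.card_range]
    calc 3 * (listFinset t).card + 1 ≤ 3 * 4 ^ (t+1) + 4 ^ (t+1) := by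
          have : (1:ℕ) ≤ 4 ^ (t+1) := Nat.one_le_pow _ _ (by norm_num)
          omega
      _ = 4 ^ (t+2) := by ring

def bigFinset (n t : ℕ) : Finset (List ℕ) :=
  ((Finset.range (n+1)) ×ˢ (Finset.range (n+1)) ×ˢ (Finset.range (n+1)) ×ˢ listFinset t).image recon

lemma bigFinset_card (n t : ℕ) : (bigFinset n t).card ≤ (n+1)^3 * 4^(t+1) := by
  refine le_trans Finset.card_image_le ?_
  simp only [Finset.card_product, Finset.card_range]
  calc (n+1) * ((n+1) * ((n+1) * (listFinset t).card)) ≤ (n+1) * ((n+1) * ((n+1) * 4^(t+1))) := by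
        exact Nat.mul_le_mul_left _ (Nat.mul_le_mul_left _ (Nat.mul_le_mul_left _ (listFinset_card t)))
    _ = (n+1)^3 * 4^(t+1) := by ring
lemma ball_subset_bigFinset {n t : ℕ} (ht : 2 * n ≤ t * (t + 1)) :
    ball Ttilde n ⊆ ↑(bigFinset n t) := by
  rintro v ⟨hv, hlen⟩
  obtain ⟨j, y, ⟨N, hyN⟩, hveq⟩ := mem_Ttilde_elim hv
  obtain ⟨e, c, l, he, hc, hl, hmem, heq⟩ :=
    take_drop_expand_recon (n := n) (n' := v.length) (j := j) (t := t) y hlen ht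
  refine Finset.mem_coe.2 (Finset.mem_image.2 ⟨(v.length, e, c, l),
    Finset.mem_product.2 ⟨?_, Finset.mem_product.2 ⟨?_, Finset.mem_product.2 ⟨?_, ?_⟩⟩⟩, ?_⟩)
  · exact Finset.mem_range.2 (show v.length < n + 1 by omega)
  · exact Finset.mem_range.2 (show e < n + 1 by omega)
  · exact Finset.mem_range.2 (show c < n + 1 by omega)
  · exact mem_listFinset t l hl (fun a ha => t13level_entries hyN a (hmem a ha))
  · rw [← heq, ← hveq]

lemma ball_finite (n : ℕ) : (ball Ttilde n).Finite := by
  have ht : 2 * n ≤ (Nat.sqrt (2*n) + 1) * ((Nat.sqrt (2*n) + 1) + 1) := by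
    have := Nat.lt_succ_sqrt (2*n)
    nlinarith
  exact Set.Finite.subset (bigFinset n (Nat.sqrt (2*n) + 1)).finite_toSet
    (ball_subset_bigFinset ht)

lemma ball_card_upper (n : ℕ) :
    Nat.card (ball Ttilde n) ≤ (n+1)^3 * 4^(Nat.sqrt (2*n) + 2) := by
  have ht : 2 * n ≤ (Nat.sqrt (2*n) + 1) * ((Nat.sqrt (2*n) + 1) + 1) := by
    have := Nat.lt_succ_sqrt (2*n)
    nlinarith
  rw [Nat.card_coe_set_eq]
  calc (ball Ttilde n).ncard ≤ (↑(bigFinset n (Nat.sqrt (2*n) + 1)) : Set (List ℕ)).ncard :=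
        Set.ncard_le_ncard (ball_subset_bigFinset ht) (Finset.finite_toSet _)
    _ = (bigFinset n (Nat.sqrt (2*n) + 1)).card := Set.ncard_coe_finset _
    _ ≤ (n+1)^3 * 4^(Nat.sqrt (2*n) + 2) := bigFinset_card n _

lemma ball_card_lower (n : ℕ) : 2 ^ (Nat.sqrt n) ≤ Nat.card (ball Ttilde n) := by
  set m := Nat.sqrt n with hm
  have hnodup : ((T13Level m).map (expandFrom 0)).Nodup := by
    refine List.Nodup.map_on ?_ (t13level_nodup m)
    intro a ha b hb hab
    exact expandFrom_inj a b 0 (by rw [t13level_length ha, t13level_length hb]) hab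
  set F : Finset (List ℕ) := ⟨((T13Level m).map (expandFrom 0) : Multiset (List ℕ)), by
    exact_mod_cast hnodup⟩ with hF
  have hcard : F.card = 2 ^ m := by
    show Multiset.card _ = 2 ^ m
    rw [Multiset.coe_card, List.length_map, t13level_card]
  have hsub : ↑F ⊆ ball Ttilde n := by
    intro v hv
    have : v ∈ (T13Level m).map (expandFrom 0) := by
      simpa [hF, Finset.mem_coe, Finset.mem_mk] using hv
    obtain ⟨w, hw, rfl⟩ := List.mem_map.1 this
    refine ⟨expand_mem_Ttilde hw, ?_⟩
    have h1 := expandFrom_length w 0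
    rw [t13level_length hw] at h1
    have h1' : 2 * (expandFrom 0 w).length = m * m + m := by rw [h1]; ring
    have h2 : m * m ≤ n := hm ▸ Nat.sqrt_le n
    have h3 : m ≤ n := hm ▸ Nat.sqrt_le_self n
    omega
  calc 2 ^ m = F.card := hcard.symm
    _ = (↑F : Set (List ℕ)).ncard := (Set.ncard_coe_finset _).symm
    _ ≤ (ball Ttilde n).ncard := Set.ncard_le_ncard hsub (ball_finite n)
    _ = Nat.card (ball Ttilde n) := (Nat.card_coe_set_eq _).symm
lemma log_le_two_sqrt {x : ℝ} (hx : 0 < x) : Real.log x ≤ 2 * Real.sqrt x := by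
  have h1 : Real.log (Real.sqrt x) ≤ Real.sqrt x - 1 :=
    Real.log_le_sub_one_of_pos (Real.sqrt_pos.2 hx)
  rw [Real.log_sqrt hx.le] at h1
  nlinarith [Real.sqrt_nonneg x]

end TreeNotions

set_option maxHeartbeats 2000000 in
open TreeNotions Filter ENNReal in
/-- For the shift closure `T̃` of the subdivided 1-3 tree,
`(log log |B(n)|) / log n → 1/2`. -/
theorem Ttilde_loglog_ball :
    Filter.Tendsto
      (fun n : ℕ => Real.log (Real.log (Nat.card (ball Ttilde n))) / Real.log n)
      atTop (nhds (1 / 2)) := by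
  have hlog2 : (0.6931471803:ℝ) < Real.log 2 := Real.log_two_gt_d9
  have hlog2' : Real.log 2 ≤ 1 := by
    have := Real.log_le_sub_one_of_pos (by norm_num : (0:ℝ) < 2); linarith
  obtain ⟨c₁, hc₁⟩ : ∃ c : ℝ, c = Real.log (Real.log 2 / 2) := ⟨_, rfl⟩
  obtain ⟨c₂, hc₂⟩ : ∃ c : ℝ, c = Real.log 20 := ⟨_, rfl⟩
  have key : ∀ n : ℕ, 16 ≤ n →
      1/2 * Real.log n + c₁ ≤ Real.log (Real.log (Nat.card (ball Ttilde n))) ∧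
      Real.log (Real.log (Nat.card (ball Ttilde n))) ≤ 1/2 * Real.log n + c₂ := by
    intro n hn
    have hn0 : (0:ℝ) < n := by
      have : (16:ℝ) ≤ n := by exact_mod_cast hn
      linarith
    set r := Real.sqrt n with hrdef
    have hr0 : 0 < r := Real.sqrt_pos.2 hn0
    have hr4 : 4 ≤ r := by
      have h16 : (16:ℝ) ≤ n := by exact_mod_cast hn
      nlinarith [Real.sq_sqrt hn0.le, Real.sqrt_nonneg (n:ℝ)]
    -- lower bound on log of card
    set B : ℝ := (Nat.card (ball Ttilde n) : ℝ) with hB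
    have hm : r - 1 ≤ (Nat.sqrt n : ℝ) := by
      have h1 : n < (Nat.sqrt n + 1) * (Nat.sqrt n + 1) := Nat.lt_succ_sqrt n
      have h2 : (n:ℝ) ≤ ((Nat.sqrt n : ℝ) + 1)^2 := by
        have : (n:ℝ) ≤ ((Nat.sqrt n + 1) * (Nat.sqrt n + 1) : ℕ) := by exact_mod_cast h1.le
        push_cast at this; nlinarith
      have h3 : r ≤ (Nat.sqrt n : ℝ) + 1 := by
        rw [hrdef]
        calc Real.sqrt n ≤ Real.sqrt (((Nat.sqrt n : ℝ) + 1)^2) := Real.sqrt_le_sqrt h2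
          _ = (Nat.sqrt n : ℝ) + 1 := Real.sqrt_sq (by positivity)
      linarith
    have hBlow : (2:ℝ) ^ (Nat.sqrt n) ≤ B := by
      rw [hB]
      exact_mod_cast ball_card_lower n
    have hB1 : (1:ℝ) < 2 ^ (Nat.sqrt n) := by
      have h1 : 1 ≤ Nat.sqrt n := by
        have := Nat.sqrt_le_sqrt hn
        exact le_trans (by norm_num : 1 ≤ Nat.sqrt 16) this
      calc (1:ℝ) < 2 ^ 1 := by norm_num
        _ ≤ 2 ^ (Nat.sqrt n) := pow_le_pow_right₀ (by norm_num) h1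
    set L : ℝ := Real.log B with hL
    have hL1 : Real.log 2 / 2 * r ≤ L := by
      have h1 : (Nat.sqrt n : ℝ) * Real.log 2 ≤ L := by
        rw [hL]
        calc (Nat.sqrt n : ℝ) * Real.log 2 = Real.log (2 ^ (Nat.sqrt n)) := by
              rw [Real.log_pow]
          _ ≤ Real.log B := Real.log_le_log (by positivity) hBlow
      nlinarith [hm, hr4, hlog2, hlog2']
    have hL2 : L ≤ 20 * r := by
      have hs : (Nat.sqrt (2*n) : ℝ) ≤ 2 * r := by
        have h1 : ((Nat.sqrt (2*n) : ℝ))^2 ≤ (2*n : ℝ) := by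
          have := Nat.sqrt_le' (2*n); exact_mod_cast this
        have h2 : (Nat.sqrt (2*n) : ℝ) ≤ Real.sqrt (2*n) := by
          rw [show (Nat.sqrt (2*n) : ℝ) = Real.sqrt (((Nat.sqrt (2*n) : ℝ))^2) from
            (Real.sqrt_sq (by positivity)).symm]
          exact Real.sqrt_le_sqrt h1
        have h3 : Real.sqrt (2*n) ≤ 2 * r := by
          rw [Real.sqrt_mul (by norm_num) (n:ℝ), ← hrdef]
          have hs2 : Real.sqrt 2 ≤ 2 := by
            nlinarith [Real.sq_sqrt (by norm_num : (0:ℝ) ≤ 2), Real.sqrt_nonneg (2:ℝ)]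
          nlinarith [Real.sqrt_nonneg (n:ℝ)]
        linarith
      have hlogn1 : Real.log (n+1) ≤ 4 * r := by
        have h1 : Real.log (n+1) ≤ 2 * Real.sqrt (n+1) := log_le_two_sqrt (by linarith)
        have h16 : (16:ℝ) ≤ n := by exact_mod_cast hn
        have h2 : Real.sqrt ((n:ℝ)+1) ≤ Real.sqrt (2*n) := Real.sqrt_le_sqrt (by linarith)
        have h3 : Real.sqrt (2*(n:ℝ)) ≤ 2 * r := by
          rw [Real.sqrt_mul (by norm_num) (n:ℝ), ← hrdef]
          have hs2 : Real.sqrt 2 ≤ 2 := by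
            nlinarith [Real.sq_sqrt (by norm_num : (0:ℝ) ≤ 2), Real.sqrt_nonneg (2:ℝ)]
          nlinarith [Real.sqrt_nonneg (n:ℝ)]
        linarith
      have hlog4 : Real.log 4 ≤ 2 := by
        rw [show (4:ℝ) = 2^2 from by norm_num, Real.log_pow]
        push_cast; linarith
      have hlog4' : 0 ≤ Real.log 4 := Real.log_nonneg (by norm_num)
      have hup : B ≤ ((n:ℝ)+1)^3 * 4^(Nat.sqrt (2*n) + 2) := by
        rw [hB]
        have := ball_card_upper n
        exact_mod_cast this
      have h5 : L ≤ 3 * Real.log (n+1) + ((Nat.sqrt (2*n):ℝ) + 2) * Real.log 4 := by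
        rw [hL]
        calc Real.log B ≤ Real.log (((n:ℝ)+1)^3 * 4^(Nat.sqrt (2*n) + 2)) :=
              Real.log_le_log (by linarith [hBlow, hB1]) hup
          _ = 3 * Real.log (n+1) + ((Nat.sqrt (2*n):ℝ) + 2) * Real.log 4 := by
              rw [Real.log_mul (by positivity) (by positivity), Real.log_pow, Real.log_pow]
              push_cast; ring
      have m1 : ((Nat.sqrt (2*n):ℝ) + 2) * Real.log 4 ≤ (2*r+2) * Real.log 4 :=
        mul_le_mul_of_nonneg_right (by linarith) hlog4'
      have m2 : (2*r+2) * Real.log 4 ≤ (2*r+2) * 2 :=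
        mul_le_mul_of_nonneg_left hlog4 (by linarith)
      linarith
    have h41 : Real.log 2 / 2 * 4 ≤ Real.log 2 / 2 * r :=
      mul_le_mul_of_nonneg_left hr4 (by linarith)
    have hLpos : 1 < L := by linarith
    constructor
    · have hpos : (0:ℝ) < Real.log 2 / 2 * r := by linarith
      have h1 : Real.log (Real.log 2 / 2 * r) ≤ Real.log L :=
        Real.log_le_log hpos hL1
      have h2 : Real.log (Real.log 2 / 2 * r) = c₁ + 1/2 * Real.log n := by
        rw [Real.log_mul (ne_of_gt (by linarith)) (ne_of_gt hr0), hc₁, hrdef, Real.log_sqrt hn0.le]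
        ring
      rw [h2] at h1
      have : Real.log (Real.log B) = Real.log L := by rw [hL]
      rw [this]; linarith
    · have h1 : Real.log L ≤ Real.log (20 * r) :=
        Real.log_le_log (by linarith) hL2
      have h2 : Real.log (20 * r) = c₂ + 1/2 * Real.log n := by
        rw [Real.log_mul (by norm_num) (ne_of_gt hr0), hc₂, hrdef, Real.log_sqrt hn0.le]
        ring
      rw [h2] at h1
      have : Real.log (Real.log B) = Real.log L := by rw [hL]
      rw [this]; linarith
  -- squeeze
  have hlogtop : Tendsto (fun n : ℕ => Real.log n) atTop atTop :=
    Real.tendsto_log_atTop.comp tendsto_natCast_atTop_atTop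
  have t1 : Tendsto (fun n : ℕ => 1/2 + c₁ / Real.log n) atTop (nhds (1/2)) := by
    have := Tendsto.div_atTop (tendsto_const_nhds (x := c₁)) hlogtop
    simpa using tendsto_const_nhds.add this
  have t2 : Tendsto (fun n : ℕ => 1/2 + c₂ / Real.log n) atTop (nhds (1/2)) := by
    have := Tendsto.div_atTop (tendsto_const_nhds (x := c₂)) hlogtop
    simpa using tendsto_const_nhds.add this
  refine tendsto_of_tendsto_of_tendsto_of_le_of_le' t1 t2 ?_ ?_
  · filter_upwards [eventually_ge_atTop 16] with n hn
    have hln : 0 < Real.log n := by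
      have : (16:ℝ) ≤ (n:ℝ) := by exact_mod_cast hn
      apply Real.log_pos; linarith
    have h := (key n hn).1
    rw [le_div_iff₀ hln]
    have e : (1/2 + c₁/Real.log n) * Real.log n = 1/2 * Real.log n + c₁ := by
      field_simp
    rw [e]
    exact h
  · filter_upwards [eventually_ge_atTop 16] with n hn
    have hln : 0 < Real.log n := by
      have : (16:ℝ) ≤ (n:ℝ) := by exact_mod_cast hn
      apply Real.log_pos; linarith
    have h := (key n hn).2
    rw [div_le_iff₀ hln]
    have e : (1/2 + c₂/Real.log n) * Real.log n = 1/2 * Real.log n + c₂ := by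
      field_simp
    rw [e]
    exact h
end
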